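/- Let N ≥ 1, δ ≥ 0, and let x₁,…,x_N and y₁,…,y_N be real numbers with |y_n − x_n| ≤ δ for all n ≤ N. Then the discrepancy satisfies D_N(y₁,…,y_N) ≤ 2·D_N(x₁,…,x_N) + 2δ. -/

import Mathlib

open scoped Classical

/-- The discrepancy of the first `N` terms of the sequence `x`. -/
noncomputable def discrepancy (N : ℕ) (x : ℕ → ℝ) : ℝ :=
  ⨆ I : {p : ℝ × ℝ // 0 ≤ p.1 ∧ p.1 ≤ p.2 ∧ p.2 ≤ 1},
    |(((Finset.Icc 1 N).filter
        (fun n => Int.fract (x n) ∈ Set.Ico I.1.1 I.1.2)).card : ℝ) / N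
      - (I.1.2 - I.1.1)|

/-!
On the circle `ℝ ⧸ ℤ` the intervals of `[0, 1)` become arcs. A point that moves by at most `δ`
and ends in the arc `[a, b)` started in `[a - δ, b + δ)`, and a point starting in `[a + δ, b - δ)`
ends in `[a, b)`. An arc is an interval of `[0, 1)` or the complement of one, so the counting error
of every arc is also at most `D_N(x)`. Comparing counts gives `D_N(y) ≤ D_N(x) + 2δ`, which implies
the claim as `D_N(x) ≥ 0`.
-/

open Set

/-- The points of `ℝ` lying on the arc of `ℝ ⧸ ℤ` swept out by `[c, d)`. -/
def periodicIco (c d : ℝ) : Set ℝ := ⋃ m : ℤ, (fun t => t - m) ⁻¹' Ico c d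

theorem mem_periodicIco {c d t : ℝ} : t ∈ periodicIco c d ↔ ∃ m : ℤ, t - m ∈ Ico c d :=
  mem_iUnion

theorem periodicIco_sub_intCast (c d : ℝ) (m : ℤ) :
    periodicIco (c - m) (d - m) = periodicIco c d := by
  ext t
  simp only [mem_periodicIco, mem_Ico]
  constructor
  · rintro ⟨k, h₁, h₂⟩
    exact ⟨k - m, by push_cast; constructor <;> linarith⟩
  · rintro ⟨k, h₁, h₂⟩
    exact ⟨k + m, by push_cast; constructor <;> linarith⟩

theorem preimage_fract_Ico {a b : ℝ} (ha : 0 ≤ a) (hb : b ≤ 1) :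
    Int.fract ⁻¹' Ico a b = periodicIco a b := by
  rw [Int.preimage_fract, inter_eq_left.mpr (Ico_subset_Ico ha hb), periodicIco]

theorem periodicIco_eq_compl_preimage_fract {c d : ℝ} (hc : c ≤ 1) (hd : 1 ≤ d) :
    periodicIco c d = (Int.fract ⁻¹' Ico (d - 1) c)ᶜ := by
  ext t
  have hft := Int.floor_add_fract t
  have := Int.fract_nonneg t
  have := Int.fract_lt_one t
  simp only [mem_periodicIco, mem_compl_iff, mem_preimage, mem_Ico, not_and]
  constructor
  · rintro ⟨m, h₁, h₂⟩ h
    rcases le_or_gt ⌊t⌋ m with hm | hm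
    · have : (⌊t⌋ : ℝ) ≤ m := by exact_mod_cast hm
      linarith
    · have : (m : ℝ) + 1 ≤ ⌊t⌋ := by exact_mod_cast hm
      linarith
  · intro h
    rcases le_or_gt c (Int.fract t) with hc' | hc'
    · exact ⟨⌊t⌋, by constructor <;> linarith⟩
    · have : Int.fract t < d - 1 := lt_of_not_ge fun h' => h h' hc'
      exact ⟨⌊t⌋ - 1, by push_cast; constructor <;> linarith⟩

theorem mem_periodicIco_of_abs_sub_le {c d u v δ : ℝ} (hu : u ∈ periodicIco c d)
    (huv : |v - u| ≤ δ) : v ∈ periodicIco (c - δ) (d + δ) := by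
  obtain ⟨m, h₁, h₂⟩ := mem_periodicIco.mp hu
  obtain ⟨h₃, h₄⟩ := abs_le.mp huv
  exact mem_periodicIco.mpr ⟨m, by constructor <;> linarith⟩

noncomputable def countIn (N : ℕ) (z : ℕ → ℝ) (S : Set ℝ) : ℕ :=
  ((Finset.Icc 1 N).filter fun n => z n ∈ S).card

section countIn

variable {N : ℕ} {z : ℕ → ℝ}

theorem countIn_le (S : Set ℝ) : countIn N z S ≤ N :=
  (Finset.card_filter_le _ _).trans (Nat.card_Icc 1 N).le

theorem countIn_div_le_one (S : Set ℝ) : (countIn N z S : ℝ) / N ≤ 1 :=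
  div_le_one_of_le₀ (by exact_mod_cast countIn_le S) N.cast_nonneg

theorem countIn_le_countIn {w : ℕ → ℝ} {S T : Set ℝ}
    (h : ∀ n, 1 ≤ n → n ≤ N → z n ∈ S → w n ∈ T) : countIn N z S ≤ countIn N w T := by
  refine Finset.card_le_card fun n hn => ?_
  simp only [Finset.mem_filter, Finset.mem_Icc] at hn ⊢
  exact ⟨hn.1, h n hn.1.1 hn.1.2 hn.2⟩

theorem countIn_compl_div_eq (hN : N ≠ 0) (S : Set ℝ) :
    (countIn N z Sᶜ : ℝ) / N = 1 - countIn N z S / N := by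
  have hsum : countIn N z S + countIn N z Sᶜ = N := by
    simpa [countIn] using Finset.card_filter_add_card_filter_not (s := Finset.Icc 1 N) (z · ∈ S)
  rw [eq_sub_iff_add_eq, ← add_div, div_eq_one_iff_eq (by exact_mod_cast hN)]
  exact_mod_cast (add_comm _ _).trans hsum

theorem countIn_periodicIco_le_of_abs_sub_le {w : ℕ → ℝ} {δ : ℝ}
    (h : ∀ n, 1 ≤ n → n ≤ N → |w n - z n| ≤ δ) (c d : ℝ) :
    countIn N z (periodicIco c d) ≤ countIn N w (periodicIco (c - δ) (d + δ)) :=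
  countIn_le_countIn fun n h₁ h₂ hn => mem_periodicIco_of_abs_sub_le hn (h n h₁ h₂)

theorem discrepancy_eq_iSup (N : ℕ) (z : ℕ → ℝ) :
    discrepancy N z = ⨆ I : {p : ℝ × ℝ // 0 ≤ p.1 ∧ p.1 ≤ p.2 ∧ p.2 ≤ 1},
      |(countIn N z (Int.fract ⁻¹' Ico I.1.1 I.1.2) : ℝ) / N - (I.1.2 - I.1.1)| := by
  simp only [discrepancy, countIn, mem_preimage]

theorem abs_countIn_div_sub_le_discrepancy {a b : ℝ} (ha : 0 ≤ a) (hab : a ≤ b) (hb : b ≤ 1) :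
    |(countIn N z (Int.fract ⁻¹' Ico a b) : ℝ) / N - (b - a)| ≤ discrepancy N z := by
  rw [discrepancy_eq_iSup]
  refine le_ciSup (f := fun I : {p : ℝ × ℝ // 0 ≤ p.1 ∧ p.1 ≤ p.2 ∧ p.2 ≤ 1} =>
    |(countIn N z (Int.fract ⁻¹' Ico I.1.1 I.1.2) : ℝ) / N - (I.1.2 - I.1.1)|)
    ⟨1, ?_⟩ ⟨(a, b), ha, hab, hb⟩
  rintro _ ⟨⟨⟨a', b'⟩, ha', hab', hb'⟩, rfl⟩
  have h₀ : (0 : ℝ) ≤ (countIn N z (Int.fract ⁻¹' Ico a' b') : ℝ) / N := by positivity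
  have h₁ := countIn_div_le_one (N := N) (z := z) (Int.fract ⁻¹' Ico a' b')
  exact abs_sub_le_iff.mpr ⟨by linarith, by linarith⟩

theorem discrepancy_nonneg (N : ℕ) (z : ℕ → ℝ) : 0 ≤ discrepancy N z :=
  (abs_nonneg _).trans
    (abs_countIn_div_sub_le_discrepancy (N := N) (z := z) le_rfl le_rfl zero_le_one)

theorem abs_countIn_periodicIco_div_sub_le_discrepancy_of_mem_Icc (hN : 1 ≤ N) {c d : ℝ}
    (hc : c ∈ Icc 0 1) (hcd : c ≤ d) (hdc : d ≤ c + 1) :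
    |(countIn N z (periodicIco c d) : ℝ) / N - (d - c)| ≤ discrepancy N z := by
  rcases le_or_gt d 1 with hd | hd
  · rw [← preimage_fract_Ico hc.1 hd]
    exact abs_countIn_div_sub_le_discrepancy hc.1 hcd hd
  · rw [periodicIco_eq_compl_preimage_fract hc.2 hd.le, countIn_compl_div_eq (by omega)]
    have := abs_countIn_div_sub_le_discrepancy (N := N) (z := z) (a := d - 1) (b := c)
      (by linarith) (by linarith) hc.2
    rw [abs_le] at this ⊢
    constructor <;> linarith

theorem abs_countIn_periodicIco_div_sub_le_discrepancy (hN : 1 ≤ N) {c d : ℝ} (hcd : c ≤ d)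
    (hdc : d ≤ c + 1) :
    |(countIn N z (periodicIco c d) : ℝ) / N - (d - c)| ≤ discrepancy N z := by
  have hc : c - ⌊c⌋ ∈ Icc 0 1 := by
    rw [Int.self_sub_floor]
    exact ⟨Int.fract_nonneg c, (Int.fract_lt_one c).le⟩
  rw [← periodicIco_sub_intCast c d ⌊c⌋, ← sub_sub_sub_cancel_right d c ⌊c⌋]
  exact abs_countIn_periodicIco_div_sub_le_discrepancy_of_mem_Icc hN hc (by linarith)
    (by linarith)

end countIn

theorem discrepancy_le_add_of_abs_sub_le {N : ℕ} (hN : 1 ≤ N) {δ : ℝ} {x y : ℕ → ℝ}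
    (h : ∀ n, 1 ≤ n → n ≤ N → |y n - x n| ≤ δ) :
    discrepancy N y ≤ discrepancy N x + 2 * δ := by
  have hδ : 0 ≤ δ := (abs_nonneg _).trans (h 1 le_rfl hN)
  have hD := discrepancy_nonneg N x
  have : Nonempty {p : ℝ × ℝ // 0 ≤ p.1 ∧ p.1 ≤ p.2 ∧ p.2 ≤ 1} :=
    ⟨⟨(0, 0), le_rfl, le_rfl, zero_le_one⟩⟩
  rw [discrepancy_eq_iSup]
  refine ciSup_le fun ⟨⟨a, b⟩, ha, hab, hb⟩ => ?_
  dsimp only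
  rw [preimage_fract_Ico ha hb, abs_le]
  have h₀ : (0 : ℝ) ≤ (countIn N y (periodicIco a b) : ℝ) / N := by positivity
  have h₁ := countIn_div_le_one (N := N) (z := y) (periodicIco a b)
  constructor
  · rcases le_or_gt (b - a) (2 * δ) with hab' | hab'
    · linarith
    · have hle : (countIn N x (periodicIco (a + δ) (b - δ)) : ℝ) / N
          ≤ (countIn N y (periodicIco a b) : ℝ) / N := by
        gcongr
        simpa using countIn_periodicIco_le_of_abs_sub_le h (a + δ) (b - δ)
      have := abs_le.mp (abs_countIn_periodicIco_div_sub_le_discrepancy (z := x) hN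
        (c := a + δ) (d := b - δ) (by linarith) (by linarith))
      linarith
  · rcases le_or_gt 1 (b - a + 2 * δ) with hab' | hab'
    · linarith
    · have hle : (countIn N y (periodicIco a b) : ℝ) / N
          ≤ (countIn N x (periodicIco (a - δ) (b + δ)) : ℝ) / N := by
        gcongr
        exact countIn_periodicIco_le_of_abs_sub_le
          (fun n h₁ h₂ => (abs_sub_comm _ _).trans_le (h n h₁ h₂)) a b
      have := abs_le.mp (abs_countIn_periodicIco_div_sub_le_discrepancy (z := x) hN
        (c := a - δ) (d := b + δ) (by linarith) (by linarith))
      linarith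

theorem discrepancy_perturbed_general (N : ℕ) (hN : 1 ≤ N) (δ : ℝ)
    (x y : ℕ → ℝ) (h : ∀ n, 1 ≤ n → n ≤ N → |y n - x n| ≤ δ) :
    discrepancy N y ≤ 2 * discrepancy N x + 2 * δ := by
  linarith [discrepancy_le_add_of_abs_sub_le hN h, discrepancy_nonneg N x]

theorem discrepancy_perturbed (N : ℕ) (hN : 1 ≤ N) (δ : ℝ) (hδ : 0 ≤ δ)
    (x y : ℕ → ℝ) (h : ∀ n, 1 ≤ n → n ≤ N → |y n - x n| ≤ δ) :
    discrepancy N y ≤ 2 * discrepancy N x + 2 * δ :=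
  discrepancy_perturbed_general N hN δ x y h
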